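/- The implication introduction and elimination rules are MR-realised: for all simple propositions A, B, C : SP, the sequent A ⊢ B → C is MR-realised if and only if the sequent A ∧ B ⊢ C is MR-realised. -/
import Mathlib


universe u

/-- Simple propositions. -/
inductive SP : Type 1 where
  | atom : Type → SP
  | bot  : SP
  | and  : SP → SP → SP
  | or   : SP → SP → SP
  | imp  : SP → SP → SP
  | all  : (A : Type) → (A → SP) → SP
  | ex   : (A : Type) → (A → SP) → SP

/-- The standard (homomorphic) translation into types. -/
def Tp : SP → Type
  | .atom A  => A
  | .bot     => Empty
  | .and A B => Tp A × Tp B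
  | .or A B  => Tp A ⊕ Tp B
  | .imp A B => Tp A → Tp B
  | .all A P => ∀ x : A, Tp (P x)
  | .ex A P  => Σ x : A, Tp (P x)

/-- The crude type of potential realisers. -/
def Cr : SP → Type
  | .atom _  => Unit
  | .bot     => Unit
  | .and A B => Cr A × Cr B
  | .or A B  => Cr A ⊕ Cr B
  | .imp A B => Cr A → Cr B
  | .all A P => ∀ x : A, Cr (P x)
  | .ex A P  => Σ x : A, Cr (P x)

/-- Modified realisability (with truth). -/
def MR : (S : SP) → Cr S → Type
  | .atom A, _  => A
  | .bot, _     => Empty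
  | .and A B, r => MR A r.1 × MR B r.2
  | .or A B, r  =>
      match r with
      | .inl s => MR A s
      | .inr t => MR B t
  | .imp A B, r => (Tp A → Tp B) × (∀ s : Cr A, MR A s → MR B (r s))
  | .all A P, r => ∀ x : A, MR (P x) (r x)
  | .ex A P, r  => MR (P r.1) r.2

/-- The sequent `A ⊢ B` is MR-realised. -/
def MRrealised (A B : SP) : Prop :=
  ∃ r : Cr (SP.imp A B), Nonempty (MR (SP.imp A B) r)

/-- From a realiser with truth we can extract a witness of the standard translation. -/
def mrTp : (S : SP) → (r : Cr S) → MR S r → Tp S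
  | .atom _, _, m => m
  | .bot, _, m => m.elim
  | .and A B, r, m => (mrTp A r.1 m.1, mrTp B r.2 m.2)
  | .or A B, r, m =>
      match r, m with
      | .inl s, m => Sum.inl (mrTp A s m)
      | .inr t, m => Sum.inr (mrTp B t m)
  | .imp _ _, _, m => m.1
  | .all A P, r, m => fun x => mrTp (P x) (r x) (m x)
  | .ex A P, r, m => ⟨r.1, mrTp (P r.1) r.2 m⟩

/-- The implication introduction and elimination rules are MR-realised. -/
theorem mr_implication (A B C : SP) :
    MRrealised A (SP.imp B C) ↔ MRrealised (SP.and A B) C := by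
  constructor
  · rintro ⟨r, ⟨m⟩⟩
    exact ⟨fun p => r p.1 p.2,
      ⟨fun p => m.1 p.1 p.2, fun s h => (m.2 s.1 h.1).2 s.2 h.2⟩⟩
  · rintro ⟨r, ⟨m⟩⟩
    exact ⟨fun s t => r (s, t),
      ⟨fun a b => m.1 (a, b), fun s hs =>
        ⟨fun b => m.1 (mrTp A s hs, b), fun t ht => m.2 (s, t) (hs, ht)⟩⟩⟩
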